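/- arXiv:1305.6208 — 2 statements merged into one kernel-verified Lean document; each statement's English description precedes it below -/
import Mathlib

section
/- Let (X,μ) be a nonatomic probability space, T a tree on X, and φ a T-good function. Let I ∈ T with I ≠ X. Then I ∈ S_φ if and only if every J ∈ T that properly contains I satisfies Av_J(φ) < Av_I(φ). -/
open MeasureTheory Filter Set

noncomputable section

/-- A tree on a probability space, as in the paper. -/
structure DTree (X : Type*) [MeasurableSpace X] (μ : Measure X) where
  mem : Set (Set X)
  child : Set X → Set (Set X)
  meas : ∀ I ∈ mem, MeasurableSet I
  top_mem : Set.univ ∈ mem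
  pos : ∀ I ∈ mem, 0 < μ I
  child_sub_mem : ∀ I ∈ mem, child I ⊆ mem
  child_countable : ∀ I ∈ mem, (child I).Countable
  child_two : ∀ I ∈ mem, ∃ J ∈ child I, ∃ K ∈ child I, J ≠ K
  child_sub : ∀ I ∈ mem, ∀ J ∈ child I, J ⊆ I
  child_disj : ∀ I ∈ mem, (child I).Pairwise Disjoint
  child_union : ∀ I ∈ mem, ⋃₀ child I = I
  generated : ∃ lvl : ℕ → Set (Set X),
    lvl 0 = {Set.univ} ∧
    (∀ m, lvl (m + 1) = ⋃ I ∈ lvl m, child I) ∧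
    mem = ⋃ m, lvl m ∧
    Tendsto (fun m => ⨆ I ∈ lvl m, μ I) atTop (nhds 0)

variable {X : Type*} [MeasurableSpace X]

/-- The average of `φ` over `I`. -/
def trAvg (μ : Measure X) (φ : X → ℝ) (I : Set X) : ℝ :=
  (μ I).toReal⁻¹ * ∫ x in I, φ x ∂μ

/-- The dyadic maximal operator associated with the tree `T`. -/
def trMax (μ : Measure X) (T : DTree X μ) (φ : X → ℝ) (x : X) : ℝ :=
  sSup {r : ℝ | ∃ I ∈ T.mem, x ∈ I ∧ r = trAvg μ (fun y => |φ y|) I}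

/-- The exceptional set `A_φ`. -/
def trBad (μ : Measure X) (T : DTree X μ) (φ : X → ℝ) : Set X :=
  {x | ∀ I ∈ T.mem, x ∈ I → trAvg μ φ I < trMax μ T φ x}

/-- `φ` is `T`-good if the exceptional set `A_φ` is null. -/
def TGood (μ : Measure X) (T : DTree X μ) (φ : X → ℝ) : Prop :=
  μ (trBad μ T φ) = 0

/-- The set `A(φ, I) = {x ∈ X \ A_φ : I_φ(x) = I}`, where `I_φ(x)` is the largest
element `I` of the tree with `x ∈ I` and `M_T φ x = Av_I(φ)`. -/
def trA (μ : Measure X) (T : DTree X μ) (φ : X → ℝ) (I : Set X) : Set X :=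
  {x | x ∉ trBad μ T φ ∧ I ∈ T.mem ∧ x ∈ I ∧ trMax μ T φ x = trAvg μ φ I ∧
    ∀ J ∈ T.mem, x ∈ J → trMax μ T φ x = trAvg μ φ J → J ⊆ I}

/-- The subtree `S_φ`. -/
def trS (μ : Measure X) (T : DTree X μ) (φ : X → ℝ) : Set (Set X) :=
  {I | I ∈ T.mem ∧ 0 < μ (trA μ T φ I)} ∪ {Set.univ}

/-- `J* = I` : `I` is the smallest element of `S_φ` properly containing `J`. -/
def IsStarOf (μ : Measure X) (T : DTree X μ) (φ : X → ℝ) (J I : Set X) : Prop :=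
  I ∈ trS μ T φ ∧ J ⊂ I ∧ ∀ K ∈ trS μ T φ, J ⊂ K → I ⊆ K

/-- `H_q(z) = (1-q) z^q + q z^(q-1)`. -/
def funH (q z : ℝ) : ℝ := (1 - q) * z ^ q + q * z ^ (q - 1)

/-- `ω_q(z) = (H_q⁻¹(z))^q`, with `H_q⁻¹` the inverse of `H_q : [1,∞) → [1,∞)`. -/
def funOmega (q z : ℝ) : ℝ := (Function.invFunOn (funH q) (Set.Ici 1) z) ^ q

/-- The constant `c = ω_q(((1-q)L^q + qL^(q-1)f)/h)`. -/
def bellC (q f h L : ℝ) : ℝ := funOmega q (((1 - q) * L ^ q + q * L ^ (q - 1) * f) / h)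

/-- An extremal sequence for the Bellman function of three variables. -/
def IsExtremal (μ : Measure X) (T : DTree X μ) (q f h L : ℝ) (φ : ℕ → X → ℝ) : Prop :=
  (∀ n x, 0 ≤ φ n x) ∧ (∀ n, Measurable (φ n)) ∧ (∀ n, Integrable (φ n) μ) ∧
  (∀ n, ∫ x, φ n x ∂μ = f) ∧ (∀ n, ∫ x, φ n x ^ q ∂μ = h) ∧
  Tendsto (fun n => ∫ x, (max (trMax μ T (φ n) x) L) ^ q ∂μ) atTop
    (nhds (bellC q f h L * h))

/-! A point `x` of `A(φ, I)` has `M_T φ x = Av_I φ`, so every `J ∋ x` has `Av_J φ ≤ Av_I φ`, and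
equality for some `J ⊋ I` would contradict the maximality of `I_φ(x) = I`. Conversely, the maximal
tree sets `K ⊆ I` with `Av_K φ > Av_I φ` are pairwise disjoint, so their union has average
`> Av_I φ` and cannot fill `I` up to a null set. At a point of `I` outside that union every
average is at most `Av_I φ`, strictly so above `I`, which puts the point in `A(φ, I)`. -/

namespace DTree

variable {μ : Measure X} (T : DTree X μ)

theorem nonempty_of_mem {I : Set X} (hI : I ∈ T.mem) : I.Nonempty :=
  nonempty_of_measure_ne_zero (T.pos I hI).ne'

section Levels

variable {T} {lvl : ℕ → Set (Set X)}

theorem level_subset_mem (hl0 : lvl 0 = {univ})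
    (hls : ∀ m, lvl (m + 1) = ⋃ I ∈ lvl m, T.child I) (n : ℕ) : lvl n ⊆ T.mem := by
  induction n with
  | zero => rw [hl0]; exact singleton_subset_iff.2 T.top_mem
  | succ n ih =>
    rw [hls]
    exact iUnion₂_subset fun I hI => T.child_sub_mem I (ih hI)

theorem countable_level (hl0 : lvl 0 = {univ})
    (hls : ∀ m, lvl (m + 1) = ⋃ I ∈ lvl m, T.child I) (n : ℕ) : (lvl n).Countable := by
  induction n with
  | zero => rw [hl0]; exact countable_singleton _
  | succ n ih =>
    rw [hls]
    exact ih.biUnion fun I hI => T.child_countable I (level_subset_mem hl0 hls n hI)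

theorem eq_of_mem_level_of_inter_nonempty (hl0 : lvl 0 = {univ})
    (hls : ∀ m, lvl (m + 1) = ⋃ I ∈ lvl m, T.child I) (n : ℕ) {I J : Set X}
    (hI : I ∈ lvl n) (hJ : J ∈ lvl n) (hIJ : (I ∩ J).Nonempty) : I = J := by
  induction n generalizing I J with
  | zero => rw [hl0] at hI hJ; exact hI.trans hJ.symm
  | succ n ih =>
    obtain ⟨x, hxI, hxJ⟩ := hIJ
    rw [hls] at hI hJ
    obtain ⟨I', hI', hII'⟩ := mem_iUnion₂.1 hI
    obtain ⟨J', hJ', hJJ'⟩ := mem_iUnion₂.1 hJ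
    have hI'm := level_subset_mem hl0 hls n hI'
    have hJ'm := level_subset_mem hl0 hls n hJ'
    obtain rfl : I' = J' :=
      ih hI' hJ' ⟨x, T.child_sub I' hI'm I hII' hxI, T.child_sub J' hJ'm J hJJ' hxJ⟩
    by_contra hne
    exact disjoint_left.1 (T.child_disj I' hI'm hII' hJJ' hne) hxI hxJ

theorem subset_of_mem_level_of_le (hl0 : lvl 0 = {univ})
    (hls : ∀ m, lvl (m + 1) = ⋃ I ∈ lvl m, T.child I) {m n : ℕ} (hmn : m ≤ n) {I J : Set X}
    (hI : I ∈ lvl m) (hJ : J ∈ lvl n) (hIJ : (I ∩ J).Nonempty) : J ⊆ I := by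
  induction n, hmn using Nat.le_induction generalizing J with
  | base => exact (eq_of_mem_level_of_inter_nonempty hl0 hls m hI hJ hIJ).symm.subset
  | succ n _ ih =>
    rw [hls] at hJ
    obtain ⟨J', hJ', hJJ'⟩ := mem_iUnion₂.1 hJ
    have hJJ'sub : J ⊆ J' := T.child_sub J' (level_subset_mem hl0 hls n hJ') J hJJ'
    exact hJJ'sub.trans (ih hJ' (hIJ.mono (inter_subset_inter_right I hJJ'sub)))

end Levels

theorem mem_countable : T.mem.Countable := by
  obtain ⟨lvl, hl0, hls, hlm, -⟩ := T.generated
  rw [hlm]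
  exact countable_iUnion (countable_level hl0 hls)

theorem subset_or_subset_of_inter_nonempty {I J : Set X} (hI : I ∈ T.mem) (hJ : J ∈ T.mem)
    (hIJ : (I ∩ J).Nonempty) : I ⊆ J ∨ J ⊆ I := by
  obtain ⟨lvl, hl0, hls, hlm, -⟩ := T.generated
  rw [hlm, mem_iUnion] at hI hJ
  obtain ⟨m, hI⟩ := hI
  obtain ⟨n, hJ⟩ := hJ
  rcases le_total m n with h | h
  · exact Or.inr (subset_of_mem_level_of_le hl0 hls h hI hJ hIJ)
  · exact Or.inl (subset_of_mem_level_of_le hl0 hls h hJ hI (inter_comm I J ▸ hIJ))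

theorem exists_maximal_superset {𝒞 : Set (Set X)} (h𝒞 : 𝒞 ⊆ T.mem) {K : Set X} (hK : K ∈ 𝒞) :
    ∃ L, K ⊆ L ∧ Maximal (· ∈ 𝒞) L := by
  classical
  obtain ⟨lvl, hl0, hls, hlm, -⟩ := T.generated
  have hex : ∃ n, ∃ L ∈ 𝒞 ∩ lvl n, K ⊆ L := by
    obtain ⟨n, hn⟩ := mem_iUnion.1 (hlm ▸ h𝒞 hK)
    exact ⟨n, K, ⟨hK, hn⟩, subset_rfl⟩
  -- Take `L` on the shallowest level carrying a superset of `K` in `𝒞`: any `L' ⊇ L` in `𝒞`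
  -- lies on a level at least as deep, hence inside `L`.
  obtain ⟨L, ⟨hL𝒞, hLlvl⟩, hKL⟩ := Nat.find_spec hex
  refine ⟨L, hKL, hL𝒞, fun L' hL' hLL' => ?_⟩
  obtain ⟨p, hp⟩ := mem_iUnion.1 (hlm ▸ h𝒞 hL')
  have hle : Nat.find hex ≤ p := Nat.find_min' hex ⟨L', ⟨hL', hp⟩, hKL.trans hLL'⟩
  obtain ⟨x, hx⟩ := T.nonempty_of_mem (h𝒞 hK)
  exact subset_of_mem_level_of_le hl0 hls hle hLlvl hp ⟨x, hKL hx, hLL' (hKL hx)⟩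

theorem exists_pairwise_disjoint_sUnion_eq {𝒞 : Set (Set X)} (h𝒞 : 𝒞 ⊆ T.mem) :
    ∃ 𝒟 ⊆ 𝒞, 𝒟.Countable ∧ 𝒟.Pairwise Disjoint ∧ ⋃₀ 𝒟 = ⋃₀ 𝒞 := by
  refine ⟨{K | Maximal (· ∈ 𝒞) K}, fun K hK => hK.prop,
    T.mem_countable.mono fun K hK => h𝒞 hK.prop, ?_, ?_⟩
  · intro K₁ hK₁ K₂ hK₂ hne
    by_contra hmeet
    rw [not_disjoint_iff_nonempty_inter] at hmeet
    rcases T.subset_or_subset_of_inter_nonempty (h𝒞 hK₁.prop) (h𝒞 hK₂.prop) hmeet with h | h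
    · exact hne (hK₁.eq_of_subset hK₂.prop h)
    · exact hne (hK₂.eq_of_subset hK₁.prop h).symm
  · refine (sUnion_subset_sUnion fun K hK => hK.prop).antisymm ?_
    rintro x ⟨K, hK, hxK⟩
    obtain ⟨L, hKL, hL⟩ := T.exists_maximal_superset h𝒞 hK
    exact ⟨L, hL, hKL hxK⟩

theorem measureReal_pos [IsFiniteMeasure μ] {I : Set X} (hI : I ∈ T.mem) : 0 < μ.real I :=
  ENNReal.toReal_pos (T.pos I hI).ne' (measure_ne_top μ I)

end DTree

theorem setIntegral_sUnion_pos {μ : Measure X} {f : X → ℝ} {𝒟 : Set (Set X)}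
    (hcount : 𝒟.Countable) (hdisj : 𝒟.Pairwise Disjoint) (hmeas : ∀ K ∈ 𝒟, MeasurableSet K)
    (hf : IntegrableOn f (⋃₀ 𝒟) μ) (hne : 𝒟.Nonempty) (hpos : ∀ K ∈ 𝒟, 0 < ∫ x in K, f x ∂μ) :
    0 < ∫ x in ⋃₀ 𝒟, f x ∂μ := by
  have := hcount.to_subtype
  rw [sUnion_eq_iUnion] at hf ⊢
  have hsum := hasSum_integral_iUnion (fun K : 𝒟 => hmeas K K.2)
    (fun K L hKL => hdisj K.2 L.2 (Subtype.coe_injective.ne hKL)) hf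
  obtain ⟨K, hK⟩ := hne
  rw [← hsum.tsum_eq]
  exact hsum.summable.tsum_pos (fun D => (hpos D D.2).le) ⟨K, hK⟩ (hpos K hK)

def avgsAt (μ : Measure X) (T : DTree X μ) (φ : X → ℝ) (x : X) : Set ℝ :=
  {r | ∃ I ∈ T.mem, x ∈ I ∧ r = trAvg μ φ I}

section Averages

variable {μ : Measure X} {T : DTree X μ} {φ : X → ℝ} {x : X} {I J K : Set X}

theorem setIntegral_eq_measureReal_mul_trAvg [IsFiniteMeasure μ] (hK : μ K ≠ 0) :
    ∫ y in K, φ y ∂μ = μ.real K * trAvg μ φ K := by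
  rw [trAvg, ← mul_assoc, measureReal_def, mul_inv_cancel₀ (ENNReal.toReal_ne_zero.2
    ⟨hK, measure_ne_top μ K⟩), one_mul]

theorem setIntegral_sub_const_eq [IsFiniteMeasure μ] (hφ : Integrable φ μ) (hK : μ K ≠ 0)
    (c : ℝ) : ∫ y in K, (φ y - c) ∂μ = μ.real K * (trAvg μ φ K - c) := by
  rw [integral_sub hφ.integrableOn (integrable_const c), setIntegral_const, smul_eq_mul,
    setIntegral_eq_measureReal_mul_trAvg hK, mul_sub]

theorem DTree.measure_diff_sUnion_trAvg_gt_pos [IsFiniteMeasure μ] (T : DTree X μ)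
    (hφ : Integrable φ μ) (hI : I ∈ T.mem) :
    0 < μ (I \ ⋃₀ {K | K ∈ T.mem ∧ K ⊆ I ∧ trAvg μ φ I < trAvg μ φ K}) := by
  set 𝒞 := {K | K ∈ T.mem ∧ K ⊆ I ∧ trAvg μ φ I < trAvg μ φ K}
  obtain ⟨𝒟, h𝒟𝒞, hcount, hdisj, h𝒟U⟩ := T.exists_pairwise_disjoint_sUnion_eq (𝒞 := 𝒞)
    fun K hK => hK.1
  have hUI : ⋃₀ 𝒟 ⊆ I := h𝒟U ▸ sUnion_subset fun K hK => hK.2.1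
  rw [← h𝒟U, pos_iff_ne_zero]
  intro hnull
  have hae : ⋃₀ 𝒟 =ᵐ[μ] I := ae_eq_set.2 ⟨by rw [sdiff_eq_empty.2 hUI, measure_empty], hnull⟩
  have hne : 𝒟.Nonempty := by
    by_contra h𝒟
    rw [not_nonempty_iff_eq_empty.1 h𝒟, sUnion_empty] at hae
    exact (T.pos I hI).ne' ((measure_congr hae).symm.trans measure_empty)
  have hpos := setIntegral_sUnion_pos (f := fun y => φ y - trAvg μ φ I) hcount hdisj
    (fun K hK => T.meas K (h𝒟𝒞 hK).1) (hφ.sub (integrable_const _)).integrableOn hne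
    fun K hK => by
      obtain ⟨hKm, -, hlt⟩ := h𝒟𝒞 hK
      rw [setIntegral_sub_const_eq hφ (T.pos K hKm).ne']
      exact mul_pos (T.measureReal_pos hKm) (sub_pos.2 hlt)
  rw [setIntegral_congr_set hae, setIntegral_sub_const_eq hφ (T.pos I hI).ne', sub_self,
    mul_zero] at hpos
  exact hpos.false

theorem trMax_eq_sSup_avgsAt (h0 : ∀ y, 0 ≤ φ y) (x : X) :
    trMax μ T φ x = sSup (avgsAt μ T φ x) := by
  have habs : (fun y => |φ y|) = φ := funext fun y => abs_of_nonneg (h0 y)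
  rw [trMax, habs, avgsAt]

theorem trMax_eq_trAvg_of_forall_le (h0 : ∀ y, 0 ≤ φ y) (hI : I ∈ T.mem) (hxI : x ∈ I)
    (hle : ∀ K ∈ T.mem, x ∈ K → trAvg μ φ K ≤ trAvg μ φ I) :
    trMax μ T φ x = trAvg μ φ I := by
  rw [trMax_eq_sSup_avgsAt h0]
  refine IsGreatest.csSup_eq ⟨⟨I, hI, hxI, rfl⟩, ?_⟩
  rintro _ ⟨K, hK, hxK, rfl⟩
  exact hle K hK hxK

theorem bddAbove_avgsAt_of_setIntegral_eq_zero [IsFiniteMeasure μ] (h0 : ∀ y, 0 ≤ φ y)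
    (hφ : Integrable φ μ) (hI : I ∈ T.mem) (hxI : x ∈ I) (hI0 : ∫ y in I, φ y ∂μ = 0) :
    BddAbove (avgsAt μ T φ x) := by
  have hbound_nonneg : 0 ≤ (μ.real I)⁻¹ * ∫ y, φ y ∂μ :=
    mul_nonneg (inv_nonneg.2 measureReal_nonneg) (integral_nonneg h0)
  refine ⟨(μ.real I)⁻¹ * ∫ y, φ y ∂μ, ?_⟩
  rintro _ ⟨K, hK, hxK, rfl⟩
  rcases T.subset_or_subset_of_inter_nonempty hI hK ⟨x, hxI, hxK⟩ with hIK | hKI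
  · exact mul_le_mul (inv_anti₀ (T.measureReal_pos hI) (measureReal_mono hIK))
      (setIntegral_le_integral hφ (Eventually.of_forall h0))
      (setIntegral_nonneg (T.meas K hK) fun y _ => h0 y) (inv_nonneg.2 measureReal_nonneg)
  · have hK0 : ∫ y in K, φ y ∂μ = 0 :=
      le_antisymm (hI0 ▸ setIntegral_mono_set hφ.integrableOn (Eventually.of_forall h0)
        hKI.eventuallyLE) (setIntegral_nonneg (T.meas K hK) fun y _ => h0 y)
    rwa [trAvg, hK0, mul_zero]

theorem trAvg_le_of_trMax_eq_trAvg [IsFiniteMeasure μ] (h0 : ∀ y, 0 ≤ φ y)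
    (hφ : Integrable φ μ) (hI : I ∈ T.mem) (hxI : x ∈ I) (hmax : trMax μ T φ x = trAvg μ φ I)
    (hK : K ∈ T.mem) (hxK : x ∈ K) : trAvg μ φ K ≤ trAvg μ φ I := by
  -- Unbounded averages would make `sSup` the junk value `0`, forcing `∫_I φ = 0`, which in turn
  -- bounds them.
  have hbdd : BddAbove (avgsAt μ T φ x) := by
    by_contra hunb
    refine hunb (bddAbove_avgsAt_of_setIntegral_eq_zero h0 hφ hI hxI ?_)
    rw [trMax_eq_sSup_avgsAt h0, Real.sSup_of_not_bddAbove hunb] at hmax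
    rw [setIntegral_eq_measureReal_mul_trAvg (T.pos I hI).ne', ← hmax, mul_zero]
  rw [← hmax, trMax_eq_sSup_avgsAt h0]
  exact le_csSup hbdd ⟨K, hK, hxK, rfl⟩

theorem trAvg_lt_of_mem_trA [IsFiniteMeasure μ] (h0 : ∀ y, 0 ≤ φ y) (hφ : Integrable φ μ)
    (hx : x ∈ trA μ T φ I) (hJ : J ∈ T.mem) (hIJ : I ⊂ J) : trAvg μ φ J < trAvg μ φ I := by
  obtain ⟨-, hI, hxI, hmax, hlargest⟩ := hx
  refine (trAvg_le_of_trMax_eq_trAvg h0 hφ hI hxI hmax hJ (hIJ.1 hxI)).lt_of_ne fun heq => ?_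
  exact hIJ.2 (hlargest J hJ (hIJ.1 hxI) (hmax.trans heq.symm))

theorem mem_trA_of_forall_trAvg_le (h0 : ∀ y, 0 ≤ φ y) (hI : I ∈ T.mem) (hxI : x ∈ I)
    (hbelow : ∀ K ∈ T.mem, K ⊆ I → x ∈ K → trAvg μ φ K ≤ trAvg μ φ I)
    (habove : ∀ J ∈ T.mem, I ⊂ J → trAvg μ φ J < trAvg μ φ I) : x ∈ trA μ T φ I := by
  have hle : ∀ K ∈ T.mem, x ∈ K → trAvg μ φ K ≤ trAvg μ φ I := by
    intro K hK hxK
    rcases T.subset_or_subset_of_inter_nonempty hI hK ⟨x, hxI, hxK⟩ with hIK | hKI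
    · rcases hIK.eq_or_ssubset with rfl | hIK
      · exact le_rfl
      · exact (habove K hK hIK).le
    · exact hbelow K hK hKI hxK
  have hmax := trMax_eq_trAvg_of_forall_le h0 hI hxI hle
  refine ⟨fun hbad => (hbad I hI hxI).ne' hmax, hI, hxI, hmax, fun J hJ hxJ hJmax => ?_⟩
  rcases T.subset_or_subset_of_inter_nonempty hI hJ ⟨x, hxI, hxJ⟩ with hIJ | hJI
  · rcases hIJ.eq_or_ssubset with rfl | hIJ
    · exact subset_rfl
    · exact absurd (hmax.symm.trans hJmax) (habove J hJ hIJ).ne'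
  · exact hJI

end Averages

theorem statement3_general {X : Type*} [MeasurableSpace X] (μ : Measure X)
    [IsProbabilityMeasure μ] (T : DTree X μ)
    (φ : X → ℝ) (h0 : ∀ x, 0 ≤ φ x) (hint : Integrable φ μ)
    (I : Set X) (hI : I ∈ T.mem) :
    I ∈ trS μ T φ ↔ ∀ J ∈ T.mem, I ⊂ J → trAvg μ φ J < trAvg μ φ I := by
  constructor
  · rintro (⟨-, hApos⟩ | rfl)
    · obtain ⟨x, hx⟩ := nonempty_of_measure_ne_zero hApos.ne'
      exact fun J hJ hIJ => trAvg_lt_of_mem_trA h0 hint hx hJ hIJ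
    · exact fun J _ hJ => (hJ.2 (subset_univ J)).elim
  · intro habove
    refine Or.inl ⟨hI, (T.measure_diff_sUnion_trAvg_gt_pos hint hI).trans_le (measure_mono ?_)⟩
    rintro x ⟨hxI, hxU⟩
    refine mem_trA_of_forall_trAvg_le h0 hI hxI (fun K hK hKI hxK => ?_) habove
    by_contra! hlt
    exact hxU ⟨K, ⟨hK, hKI, hlt⟩, hxK⟩

/-- membership in `S_φ` is characterized by strict decrease of the
averages along ancestors. -/
theorem statement3 {X : Type*} [MeasurableSpace X] (μ : Measure X)
    [IsProbabilityMeasure μ] [NullSingletonClass μ] (T : DTree X μ)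
    (φ : X → ℝ) (h0 : ∀ x, 0 ≤ φ x) (hint : Integrable φ μ) (hgood : TGood μ T φ)
    (I : Set X) (hI : I ∈ T.mem) (hne : I ≠ Set.univ) :
    I ∈ trS μ T φ ↔ ∀ J ∈ T.mem, I ⊂ J → trAvg μ φ J < trAvg μ φ I :=
  statement3_general μ T φ h0 hint I hI

end
end

section
/- Let q ∈ (0,1). For 0 < k < 1 and 0 < x < 1/k set σ_q(k,x) = H_q( x(1−k)/(1−kx) ) / H_q(x) = ((1−q)x + q − kx) / ( (1−k)^{1−q} (1−kx)^q ((1−q)x + q) ), and for μ ≥ 0 set R_{q,μ}(k,x) = ( x(1−k)/(1−kx) )^q / σ_q(k,x) + (μ^q − x^q)(1−k) on W = {(k,x) : 0 < k < 1 and 1 < x < 1/k}. Let μ > 1, λ > 1, and ξ ∈ (0,1]. If ξ ≥ k₀(λ,μ), where k₀(λ,μ) = ( ω_q(λ H_q(μ))^{1/q} − μ ) / ( μ ( ω_q(λ H_q(μ))^{1/q} − 1 ) ), then the maximum value of R_{q,μ} on the set {(k,x) ∈ W : 0 < k ≤ ξ and σ_q(k,x) = λ} equals (1/λ)·ω_q(λ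 H_q(μ)). Moreover k₀(λ,μ) is the unique solution in (0, 1/μ) of the equation σ_q(k₀, μ) = λ, and X_λ(k₀) = μ, where X_λ(k) denotes the unique solution in (1, 1/k) of H_q( x(1−k)/(1−kx) ) = λ H_q(x). -/
open MeasureTheory Filter Set

noncomputable section

/-!
For `(k, x) ∈ W` put `y = x(1-k)/(1-kx) > x`. The constraint `σ(k,x) = l` says `H(y) = l H(x)`,
i.e. `y = Y x := H⁻¹(l H(x))`, and then solving for `k` gives `1 - k = G x := y(x-1)/(x(y-1))`.
So the level set is the graph of `k = 1 - G x`, along which `R = Y(x)^q / l + (m^q - x^q) G(x)`.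
Since `H(z) = z^(q-1)((1-q)z+q)`, the derivative of `Y^q / l` is `q x^(q-1) G`, hence
`R' = (m^q - x^q) G'`; and `G' > 0` reduces to `(x-1)²((1-q)y+q) < (y-1)²((1-q)x+q)` for
`1 < x < y`. So `R` is maximal at `x = m`, where `Y m = ω^(1/q)` and `1 - G m = k₀`.
-/

open Topology

section

variable {q : ℝ}

theorem funH_eq_rpow_mul {z : ℝ} (hz : 0 < z) :
    funH q z = z ^ (q - 1) * ((1 - q) * z + q) := by
  rw [funH, Real.rpow_sub_one hz.ne']
  field_simp

theorem funH_one : funH q 1 = 1 := by simp [funH]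

theorem one_sub_mul_add_pos (hq : q ∈ Ioo (0 : ℝ) 1) {z : ℝ} (hz : 0 ≤ z) :
    0 < (1 - q) * z + q := by
  nlinarith [hq.1, hq.2]

theorem funH_pos (hq : q ∈ Ioo (0 : ℝ) 1) {z : ℝ} (hz : 0 < z) : 0 < funH q z := by
  rw [funH_eq_rpow_mul hz]
  exact mul_pos (Real.rpow_pos_of_pos hz _) (one_sub_mul_add_pos hq hz.le)

theorem hasDerivAt_funH (hq : q ∈ Ioo (0 : ℝ) 1) {z : ℝ} (hz : 0 < z) :
    HasDerivAt (funH q) (q * (1 - q) * (z - 1) / (z * ((1 - q) * z + q)) * funH q z) z := by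
  have hprod : HasDerivAt (fun z => z ^ (q - 1) * ((1 - q) * z + q))
      ((q - 1) * z ^ (q - 1 - 1) * ((1 - q) * z + q) + z ^ (q - 1) * ((1 - q) * 1)) z :=
    (Real.hasDerivAt_rpow_const (Or.inl hz.ne')).mul
      (((hasDerivAt_id z).const_mul (1 - q)).add_const q)
  have hfun : (fun z => z ^ (q - 1) * ((1 - q) * z + q)) =ᶠ[𝓝 z] funH q :=
    eventually_of_mem (Ioi_mem_nhds hz) fun w hw => (funH_eq_rpow_mul hw).symm
  refine (hprod.congr_of_eventuallyEq hfun.symm).congr_deriv ?_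
  have hc : z * (1 - q) + q ≠ 0 := by linarith [one_sub_mul_add_pos hq hz.le]
  rw [funH_eq_rpow_mul hz, Real.rpow_sub_one hz.ne' (q - 1)]
  field_simp
  ring

theorem funH_strictMonoOn (hq : q ∈ Ioo (0 : ℝ) 1) : StrictMonoOn (funH q) (Ici 1) := by
  refine strictMonoOn_of_deriv_pos (convex_Ici 1)
    (fun z hz => (hasDerivAt_funH hq (zero_lt_one.trans_le hz)).continuousAt.continuousWithinAt)
    fun z hz => ?_
  rw [interior_Ici] at hz
  have hz : 1 < z := hz
  rw [(hasDerivAt_funH hq (by linarith)).deriv]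
  have := one_sub_mul_add_pos hq (by linarith : (0 : ℝ) ≤ z)
  have := funH_pos hq (by linarith : (0 : ℝ) < z)
  have : 0 < z - 1 := by linarith
  have : 0 < 1 - q := by linarith [hq.2]
  have := hq.1
  positivity

theorem tendsto_funH_atTop (hq : q ∈ Ioo (0 : ℝ) 1) : Tendsto (funH q) atTop atTop := by
  refine tendsto_atTop_mono' atTop ?_ ((tendsto_rpow_atTop hq.1).const_mul_atTop (sub_pos.2 hq.2))
  filter_upwards [eventually_gt_atTop 0] with z hz
  have : 0 ≤ q * z ^ (q - 1) := mul_nonneg hq.1.le (Real.rpow_nonneg hz.le _)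
  rw [funH]
  linarith

theorem bijOn_funH (hq : q ∈ Ioo (0 : ℝ) 1) : BijOn (funH q) (Ici 1) (Ici 1) := by
  refine ⟨fun z hz => ?_, (funH_strictMonoOn hq).injOn, ?_⟩
  · simpa [funH_one] using (funH_strictMonoOn hq).monotoneOn self_mem_Ici hz hz
  · have hcont : ContinuousOn (funH q) (Ici 1) := fun z hz =>
      (hasDerivAt_funH hq (zero_lt_one.trans_le hz)).continuousAt.continuousWithinAt
    have := intermediate_value_Ici hcont (tendsto_funH_atTop hq)
    rwa [funH_one] at this

def funHInv (q : ℝ) : ℝ → ℝ := Function.invFunOn (funH q) (Ici 1)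

theorem one_le_funHInv (hq : q ∈ Ioo (0 : ℝ) 1) {t : ℝ} (ht : 1 ≤ t) : 1 ≤ funHInv q t :=
  (bijOn_funH hq).surjOn.mapsTo_invFunOn ht

theorem funH_funHInv (hq : q ∈ Ioo (0 : ℝ) 1) {t : ℝ} (ht : 1 ≤ t) :
    funH q (funHInv q t) = t :=
  (bijOn_funH hq).invOn_invFunOn.2 ht

theorem funHInv_funH (hq : q ∈ Ioo (0 : ℝ) 1) {z : ℝ} (hz : 1 ≤ z) :
    funHInv q (funH q z) = z :=
  (bijOn_funH hq).invOn_invFunOn.1 hz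

theorem funHInv_strictMonoOn (hq : q ∈ Ioo (0 : ℝ) 1) : StrictMonoOn (funHInv q) (Ici 1) :=
  fun s hs t ht hst => by
    rwa [← (funH_strictMonoOn hq).lt_iff_lt (one_le_funHInv hq hs) (one_le_funHInv hq ht),
      funH_funHInv hq hs, funH_funHInv hq ht]

theorem one_lt_funHInv (hq : q ∈ Ioo (0 : ℝ) 1) {t : ℝ} (ht : 1 < t) : 1 < funHInv q t := by
  have h1 := funHInv_funH hq (le_refl 1)
  rw [funH_one] at h1
  simpa only [h1] using funHInv_strictMonoOn hq (mem_Ici.2 le_rfl) (mem_Ici.2 ht.le) ht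

theorem continuousAt_funHInv (hq : q ∈ Ioo (0 : ℝ) 1) {t : ℝ} (ht : 1 < t) :
    ContinuousAt (funHInv q) t := by
  refine continuousAt_of_monotoneOn_of_image_mem_nhds (funHInv_strictMonoOn hq).monotoneOn
    (Ici_mem_nhds ht) (mem_of_superset (Ioi_mem_nhds (one_lt_funHInv hq ht)) fun z hz => ?_)
  exact ⟨funH q z, (bijOn_funH hq).mapsTo (mem_Ici.2 hz.le), funHInv_funH hq (mem_Ioi.1 hz).le⟩

theorem hasDerivAt_funHInv (hq : q ∈ Ioo (0 : ℝ) 1) {t : ℝ} (ht : 1 < t) :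
    HasDerivAt (funHInv q) ((q * (1 - q) * (funHInv q t - 1) /
      (funHInv q t * ((1 - q) * funHInv q t + q)) * t)⁻¹) t := by
  have hy := one_lt_funHInv hq ht
  have hH := hasDerivAt_funH hq (zero_lt_one.trans hy)
  rw [funH_funHInv hq ht.le] at hH
  refine hH.of_local_left_inverse (continuousAt_funHInv hq ht) ?_
    (eventually_of_mem (Ioi_mem_nhds ht) fun s hs => funH_funHInv hq (le_of_lt hs))
  have := one_sub_mul_add_pos hq (by linarith : (0 : ℝ) ≤ funHInv q t)
  have : 0 < funHInv q t - 1 := by linarith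
  have : 0 < 1 - q := by linarith [hq.2]
  have : 0 < t := by linarith
  have := hq.1
  positivity

theorem sq_sub_one_mul_lt_sq_sub_one_mul (hq : q ∈ Ioo (0 : ℝ) 1) {x y : ℝ} (hx : 1 < x)
    (hxy : x < y) : (x - 1) ^ 2 * ((1 - q) * y + q) < (y - 1) ^ 2 * ((1 - q) * x + q) := by
  have key : (y - 1) ^ 2 * ((1 - q) * x + q) - (x - 1) ^ 2 * ((1 - q) * y + q) =
      (y - x) * ((1 - q) * (x * y - 1) + q * (x + y - 2)) := by ring
  have := hq.1
  have : 0 < 1 - q := by linarith [hq.2]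
  have : 0 < x * y - 1 := by nlinarith
  have : 0 < x + y - 2 := by linarith
  have : 0 < y - x := by linarith
  have : 0 < (y - x) * ((1 - q) * (x * y - 1) + q * (x + y - 2)) := by positivity
  linarith

theorem div_one_sub_mul_eq_iff {k x y : ℝ} (hx : x ≠ 0) (hy : y ≠ 1) (hkx : 1 - k * x ≠ 0) :
    x * (1 - k) / (1 - k * x) = y ↔ 1 - k = y * (x - 1) / (x * (y - 1)) := by
  rw [div_eq_iff hkx, eq_div_iff (mul_ne_zero hx (sub_ne_zero.2 hy))]
  constructor <;> intro h <;> linear_combination -h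

theorem lt_div_one_sub_mul {k x : ℝ} (hk : 0 < k) (hx : 1 < x) (hkx : k * x < 1) :
    x < x * (1 - k) / (1 - k * x) := by
  rw [lt_div_iff₀ (by linarith)]
  nlinarith [mul_pos (mul_pos hk (by linarith : (0 : ℝ) < x)) (by linarith : (0 : ℝ) < x - 1)]

section Level

variable {l : ℝ}

def funY (q l x : ℝ) : ℝ := funHInv q (l * funH q x)

def funG (q l x : ℝ) : ℝ := funY q l x * (x - 1) / (x * (funY q l x - 1))

theorem one_lt_mul_funH (hq : q ∈ Ioo (0 : ℝ) 1) (hl : 1 < l) {x : ℝ} (hx : 1 ≤ x) :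
    1 < l * funH q x :=
  hl.trans_le (le_mul_of_one_le_right (by linarith) ((bijOn_funH hq).mapsTo hx))

theorem funH_funY (hq : q ∈ Ioo (0 : ℝ) 1) (hl : 1 < l) {x : ℝ} (hx : 1 ≤ x) :
    funH q (funY q l x) = l * funH q x :=
  funH_funHInv hq (one_lt_mul_funH hq hl hx).le

theorem eq_funY_of_funH_eq (hq : q ∈ Ioo (0 : ℝ) 1) {x y : ℝ} (hy : 1 ≤ y)
    (h : funH q y = l * funH q x) : y = funY q l x := by
  rw [funY, ← h, funHInv_funH hq hy]

theorem lt_funY (hq : q ∈ Ioo (0 : ℝ) 1) (hl : 1 < l) {x : ℝ} (hx : 1 ≤ x) :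
    x < funY q l x := by
  have hHx : 1 ≤ funH q x := (bijOn_funH hq).mapsTo hx
  have := funHInv_strictMonoOn hq hHx (one_lt_mul_funH hq hl hx).le
    (lt_mul_of_one_lt_left (by linarith) hl)
  rwa [funHInv_funH hq hx] at this

theorem hasDerivAt_funY (hq : q ∈ Ioo (0 : ℝ) 1) (hl : 1 < l) {x : ℝ} (hx : 1 < x) :
    HasDerivAt (funY q l)
      (funG q l x * ((1 - q) * funY q l x + q) / ((1 - q) * x + q)) x := by
  have hHinv := (hasDerivAt_funHInv hq (one_lt_mul_funH hq hl hx.le)).comp x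
    ((hasDerivAt_funH hq (by linarith)).const_mul l)
  refine hHinv.congr_deriv ?_
  have hy : x < funY q l x := lt_funY hq hl hx.le
  rw [show funHInv q (l * funH q x) = funY q l x from rfl, funG]
  have := hq.1; have := hq.2
  have := funH_pos hq (by linarith : (0 : ℝ) < x)
  have : l ≠ 0 := by linarith
  have := (one_sub_mul_add_pos hq (by linarith : (0 : ℝ) ≤ x)).ne'
  have := (one_sub_mul_add_pos hq (by linarith : (0 : ℝ) ≤ funY q l x)).ne'
  have : funY q l x - 1 ≠ 0 := by linarith
  have : x - 1 ≠ 0 := by linarith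
  field_simp

theorem hasDerivAt_funG (hq : q ∈ Ioo (0 : ℝ) 1) (hl : 1 < l) {x : ℝ} (hx : 1 < x) :
    HasDerivAt (funG q l) (funY q l x * ((funY q l x - 1) ^ 2 * ((1 - q) * x + q) -
        (x - 1) ^ 2 * ((1 - q) * funY q l x + q)) /
      ((funY q l x - 1) * ((1 - q) * x + q) * (x * (funY q l x - 1)) ^ 2)) x := by
  have hY := hasDerivAt_funY hq hl hx
  have hy := lt_funY hq hl hx.le
  have hD : x * (funY q l x - 1) ≠ 0 := by nlinarith
  refine ((hY.mul ((hasDerivAt_id x).sub_const 1)).div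
    ((hasDerivAt_id x).mul (hY.sub_const 1)) hD).congr_deriv ?_
  simp only [funG, id, Pi.mul_apply]
  generalize funY q l x = y at hy hD ⊢
  have := hq.1; have := hq.2
  have := (one_sub_mul_add_pos hq (by linarith : (0 : ℝ) ≤ x)).ne'
  have : y - 1 ≠ 0 := by linarith
  field_simp
  ring

theorem deriv_funG_pos (hq : q ∈ Ioo (0 : ℝ) 1) (hl : 1 < l) {x : ℝ} (hx : 1 < x) :
    0 < deriv (funG q l) x := by
  rw [(hasDerivAt_funG hq hl hx).deriv]
  have hy := lt_funY hq hl hx.le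
  have := sq_sub_one_mul_lt_sq_sub_one_mul hq hx hy
  have := one_sub_mul_add_pos hq (by linarith : (0 : ℝ) ≤ x)
  have : 0 < funY q l x - 1 := by linarith
  have : 0 < x := by linarith
  apply div_pos (mul_pos (by linarith) (by linarith))
  positivity

theorem funG_strictMonoOn (hq : q ∈ Ioo (0 : ℝ) 1) (hl : 1 < l) :
    StrictMonoOn (funG q l) (Ioi 1) :=
  strictMonoOn_of_deriv_pos (convex_Ioi 1)
    (fun x hx => (hasDerivAt_funG hq hl hx).continuousAt.continuousWithinAt)
    fun x hx => deriv_funG_pos hq hl (by rwa [interior_Ioi] at hx)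

-- `R k x` at the point `1 - k = funG q l x` of the level set `σ = l`.
def funR (q l m x : ℝ) : ℝ := funY q l x ^ q / l + (m ^ q - x ^ q) * funG q l x

theorem hasDerivAt_funR (hq : q ∈ Ioo (0 : ℝ) 1) (hl : 1 < l) (m : ℝ) {x g' : ℝ}
    (hx : 1 < x) (hg : HasDerivAt (funG q l) g' x) :
    HasDerivAt (funR q l m) ((m ^ q - x ^ q) * g') x := by
  have hy := lt_funY hq hl hx.le
  have hYq := (hasDerivAt_funY hq hl hx).rpow_const (p := q) (Or.inl (by linarith))
  have hxq := Real.hasDerivAt_rpow_const (p := q) (Or.inl (by linarith : x ≠ 0))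
  refine ((hYq.div_const l).add ((hxq.const_sub (m ^ q)).mul hg)).congr_deriv ?_
  have hHy := funH_funY hq hl hx.le
  rw [funH_eq_rpow_mul (by linarith), funH_eq_rpow_mul (by linarith)] at hHy
  have := (one_sub_mul_add_pos hq (by linarith : (0 : ℝ) ≤ x)).ne'
  have : l ≠ 0 := by linarith
  field_simp
  linear_combination (q * funG q l x) * hHy

theorem funR_le_funR_self (hq : q ∈ Ioo (0 : ℝ) 1) (hl : 1 < l) {m x : ℝ} (hm : 1 < m)
    (hx : 1 < x) : funR q l m x ≤ funR q l m m := by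
  have hR : ∀ t, 1 < t → HasDerivAt (funR q l m) ((m ^ q - t ^ q) * deriv (funG q l) t) t :=
    fun t ht => hasDerivAt_funR hq hl m ht (hasDerivAt_funG hq hl ht).differentiableAt.hasDerivAt
  rcases le_total x m with hxm | hmx
  · refine monotoneOn_of_deriv_nonneg (convex_Ioc 1 m)
      (fun t ht => (hR t ht.1).continuousAt.continuousWithinAt)
      (fun t ht => (hR t (interior_subset ht).1).differentiableAt.differentiableWithinAt)
      (fun t ht => ?_) ⟨hx, hxm⟩ ⟨hm, le_rfl⟩ hxm
    rw [interior_Ioc] at ht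
    rw [(hR t ht.1).deriv]
    exact mul_nonneg (sub_nonneg.2 (Real.rpow_le_rpow (by linarith [ht.1]) ht.2.le hq.1.le))
      (deriv_funG_pos hq hl ht.1).le
  · refine antitoneOn_of_deriv_nonpos (convex_Ici m)
      (fun t ht => (hR t (hm.trans_le ht)).continuousAt.continuousWithinAt)
      (fun t ht =>
        (hR t (hm.trans_le (interior_subset ht))).differentiableAt.differentiableWithinAt)
      (fun t ht => ?_) self_mem_Ici hmx hmx
    rw [interior_Ici] at ht
    have ht : m < t := ht
    rw [(hR t (hm.trans ht)).deriv]
    exact mul_nonpos_of_nonpos_of_nonneg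
      (sub_nonpos.2 (Real.rpow_le_rpow (by linarith) ht.le hq.1.le))
      (deriv_funG_pos hq hl (hm.trans ht)).le

theorem eq_funY_and_one_sub_eq_funG (hq : q ∈ Ioo (0 : ℝ) 1) {k x : ℝ} (hk : 0 < k)
    (hx : 1 < x) (hkx : k * x < 1) (h : funH q (x * (1 - k) / (1 - k * x)) = l * funH q x) :
    x * (1 - k) / (1 - k * x) = funY q l x ∧ 1 - k = funG q l x := by
  have hxy := lt_div_one_sub_mul hk hx hkx
  have hy := eq_funY_of_funH_eq hq (by linarith) h
  refine ⟨hy, ?_⟩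
  rw [funG, ← hy]
  exact (div_one_sub_mul_eq_iff (by linarith) (by linarith) (by linarith)).1 rfl

theorem pos_mul_lt_one_and_eq_funY_of_one_sub_eq_funG (hq : q ∈ Ioo (0 : ℝ) 1) (hl : 1 < l)
    {k x : ℝ} (hx : 1 < x) (hk : 1 - k = funG q l x) :
    0 < k ∧ k * x < 1 ∧ x * (1 - k) / (1 - k * x) = funY q l x := by
  have hy := lt_funY hq hl hx.le
  have hk_eq : k = (funY q l x - x) / (x * (funY q l x - 1)) := by
    rw [show k = 1 - funG q l x by linarith, funG]
    have : funY q l x - 1 ≠ 0 := by linarith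
    have : x ≠ 0 := by linarith
    field_simp
    ring
  have hkpos : 0 < k := by
    rw [hk_eq]
    exact div_pos (by linarith) (by nlinarith)
  have hkx : k * x < 1 := by
    rw [hk_eq, div_mul_eq_mul_div, div_lt_one (by nlinarith)]
    nlinarith
  refine ⟨hkpos, hkx, ?_⟩
  rw [div_one_sub_mul_eq_iff (by linarith) (by linarith) (by linarith), hk, funG]

end Level

end

theorem statement10_general (q l m ξ : ℝ) (hq : q ∈ Set.Ioo (0 : ℝ) 1) (hl : 1 < l)
    (hm : 1 < m)
    (σ R : ℝ → ℝ → ℝ)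
    (hσ : ∀ k x, σ k x = funH q (x * (1 - k) / (1 - k * x)) / funH q x)
    (hR : ∀ k x, R k x =
      (x * (1 - k) / (1 - k * x)) ^ q / σ k x + (m ^ q - x ^ q) * (1 - k))
    (k₀ : ℝ)
    (hk₀ : k₀ = (funOmega q (l * funH q m) ^ (1 / q) - m) /
      (m * (funOmega q (l * funH q m) ^ (1 / q) - 1)))
    (hξk : k₀ ≤ ξ) :
    IsGreatest {r : ℝ | ∃ k x : ℝ, 0 < k ∧ k < 1 ∧ 1 < x ∧ x < 1 / k ∧ k ≤ ξ ∧
        σ k x = l ∧ r = R k x} ((1 / l) * funOmega q (l * funH q m)) ∧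
    (k₀ ∈ Set.Ioo 0 (1 / m) ∧ σ k₀ m = l ∧
      ∀ k ∈ Set.Ioo (0 : ℝ) (1 / m), σ k m = l → k = k₀) ∧
    (m ∈ Set.Ioo 1 (1 / k₀) ∧ ∀ x ∈ Set.Ioo (1 : ℝ) (1 / k₀),
      funH q (x * (1 - k₀) / (1 - k₀ * x)) = l * funH q x → x = m) := by
  have hσ_iff : ∀ k x, 1 < x →
      (σ k x = l ↔ funH q (x * (1 - k) / (1 - k * x)) = l * funH q x) := fun k x hx => by
    rw [hσ, div_eq_iff (funH_pos hq (by linarith)).ne']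
  have hω : funOmega q (l * funH q m) = funY q l m ^ q := rfl
  have hk₀G : 1 - k₀ = funG q l m := by
    have hy := lt_funY hq hl hm.le
    rw [hk₀, hω, one_div, Real.rpow_rpow_inv (by linarith) hq.1.ne', funG]
    have : funY q l m - 1 ≠ 0 := by linarith
    have : m ≠ 0 := by linarith
    field_simp
    ring
  obtain ⟨hk₀pos, hk₀m, hmk₀Y⟩ :=
    pos_mul_lt_one_and_eq_funY_of_one_sub_eq_funG hq hl hm hk₀G
  have hσ₀ : σ k₀ m = l := (hσ_iff k₀ m hm).2 (by rw [hmk₀Y, funH_funY hq hl hm.le])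
  have hmk₀ : m < 1 / k₀ := by rwa [lt_div_iff₀ hk₀pos, mul_comm]
  refine ⟨⟨⟨k₀, m, hk₀pos, by nlinarith, hm, hmk₀, hξk, hσ₀, ?_⟩, ?_⟩,
    ⟨⟨hk₀pos, by rwa [lt_div_iff₀ (by linarith)]⟩, hσ₀, ?_⟩, ⟨hm, hmk₀⟩, ?_⟩
  · rw [hR, hσ₀, hmk₀Y, hω]
    ring
  · rintro r ⟨k, x, hk, -, hx, hxk, -, hσkx, rfl⟩
    have hkx : k * x < 1 := by rwa [lt_div_iff₀ hk, mul_comm] at hxk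
    obtain ⟨hY, hG⟩ := eq_funY_and_one_sub_eq_funG hq hk hx hkx ((hσ_iff k x hx).1 hσkx)
    calc R k x = funR q l m x := by rw [hR, hσkx, hY, hG, funR]
      _ ≤ funR q l m m := funR_le_funR_self hq hl hm hx
      _ = 1 / l * funOmega q (l * funH q m) := by rw [funR, hω]; ring
  · rintro k ⟨hk, hkm⟩ hσk
    have hkm : k * m < 1 := by rwa [lt_div_iff₀ (by linarith)] at hkm
    linarith [(eq_funY_and_one_sub_eq_funG hq hk hm hkm ((hσ_iff k m hm).1 hσk)).2]
  · rintro x ⟨hx, hxk⟩ hHx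
    have hkx : k₀ * x < 1 := by rwa [lt_div_iff₀ hk₀pos, mul_comm] at hxk
    have hG := (eq_funY_and_one_sub_eq_funG hq hk₀pos hx hkx hHx).2
    exact (funG_strictMonoOn hq hl).injOn hx hm (by rw [← hG, hk₀G])

/-- maximization of `R_{q,m}` on the level set `{σ_q(k,x) = l, k ≤ ξ}`. -/
theorem statement10 (q l m ξ : ℝ) (hq : q ∈ Set.Ioo (0 : ℝ) 1) (hl : 1 < l)
    (hm : 1 < m) (hξ : ξ ∈ Set.Ioc (0 : ℝ) 1)
    (σ R : ℝ → ℝ → ℝ)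
    (hσ : ∀ k x, σ k x = funH q (x * (1 - k) / (1 - k * x)) / funH q x)
    (hR : ∀ k x, R k x =
      (x * (1 - k) / (1 - k * x)) ^ q / σ k x + (m ^ q - x ^ q) * (1 - k))
    (k₀ : ℝ)
    (hk₀ : k₀ = (funOmega q (l * funH q m) ^ (1 / q) - m) /
      (m * (funOmega q (l * funH q m) ^ (1 / q) - 1)))
    (hξk : k₀ ≤ ξ) :
    IsGreatest {r : ℝ | ∃ k x : ℝ, 0 < k ∧ k < 1 ∧ 1 < x ∧ x < 1 / k ∧ k ≤ ξ ∧
        σ k x = l ∧ r = R k x} ((1 / l) * funOmega q (l * funH q m)) ∧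
    (k₀ ∈ Set.Ioo 0 (1 / m) ∧ σ k₀ m = l ∧
      ∀ k ∈ Set.Ioo (0 : ℝ) (1 / m), σ k m = l → k = k₀) ∧
    (m ∈ Set.Ioo 1 (1 / k₀) ∧ ∀ x ∈ Set.Ioo (1 : ℝ) (1 / k₀),
      funH q (x * (1 - k₀) / (1 - k₀ * x)) = l * funH q x → x = m) :=
  statement10_general q l m ξ hq hl hm σ R hσ hR k₀ hk₀ hξk
end
end
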